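/- arXiv:0911.4075 — 3 statements merged into one kernel-verified Lean document; each statement's English description precedes it below -/
import Mathlib

section
/- Let G be a T1 topological group with identity e and let F ⊆ G be a subspace which is sequential in its subspace topology. If the subspace F⁻¹F = {x⁻¹y : x, y ∈ F} of G has countable sb-character at e, then F is first countable. -/
open Set Filter Topology Cardinal Pointwise

universe u v

section Defs

variable {X : Type u} [TopologicalSpace X]

/-- A sequence converging to `x`: a countably infinite set `S` such that `S \ U` is finite
for every neighborhood `U` of `x`. -/
def ConvSeqTo (S : Set X) (x : X) : Prop :=
  S.Countable ∧ S.Infinite ∧ ∀ U ∈ 𝓝 x, (S \ U).Finite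

/-- `𝒩` is a cs*-network at `x`: for every neighborhood `U` of `x` and every sequence `S`
converging to `x` there is `N ∈ 𝒩` with `N ⊆ U` containing infinitely many members of `S`. -/
def IsCsStarNetworkAt (𝒩 : Set (Set X)) (x : X) : Prop :=
  ∀ U ∈ 𝓝 x, ∀ S : Set X, ConvSeqTo S x → ∃ N ∈ 𝒩, N ⊆ U ∧ (S ∩ N).Infinite

/-- `𝒩` is a cs-network at `x`: for every neighborhood `U` of `x` and every sequence `S`
converging to `x` there is `N ∈ 𝒩` with `N ⊆ U` containing all but finitely many members. -/
def IsCsNetworkAt (𝒩 : Set (Set X)) (x : X) : Prop :=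
  ∀ U ∈ 𝓝 x, ∀ S : Set X, ConvSeqTo S x → ∃ N ∈ 𝒩, N ⊆ U ∧ (S \ N).Finite

/-- `B` is a sequential barrier at `x`: every sequence converging to `x` lies eventually in `B`. -/
def IsSeqBarrierAt (B : Set X) (x : X) : Prop :=
  ∀ S : Set X, ConvSeqTo S x → (S \ B).Finite

/-- `𝒩` is an sb-network at `x`. -/
def IsSbNetworkAt (𝒩 : Set (Set X)) (x : X) : Prop :=
  ∀ U ∈ 𝓝 x, ∃ N ∈ 𝒩, x ∈ N ∧ N ⊆ U ∧ IsSeqBarrierAt N x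

/-- `𝒩` is a neighborhood base at `x`. -/
def IsNbhdBasisAt (𝒩 : Set (Set X)) (x : X) : Prop :=
  (∀ N ∈ 𝒩, N ∈ 𝓝 x) ∧ ∀ U ∈ 𝓝 x, ∃ N ∈ 𝒩, N ⊆ U

/-- Smallest cardinality of a cs*-network at `x`. -/
noncomputable def csStarCharAt (x : X) : Cardinal.{u} :=
  sInf {c | ∃ 𝒩 : Set (Set X), IsCsStarNetworkAt 𝒩 x ∧ #𝒩 = c}

/-- Smallest cardinality of a cs-network at `x`. -/
noncomputable def csCharAt (x : X) : Cardinal.{u} :=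
  sInf {c | ∃ 𝒩 : Set (Set X), IsCsNetworkAt 𝒩 x ∧ #𝒩 = c}

/-- Smallest cardinality of an sb-network at `x`. -/
noncomputable def sbCharAt (x : X) : Cardinal.{u} :=
  sInf {c | ∃ 𝒩 : Set (Set X), IsSbNetworkAt 𝒩 x ∧ #𝒩 = c}

/-- Smallest cardinality of a neighborhood base at `x`. -/
noncomputable def charAt (x : X) : Cardinal.{u} :=
  sInf {c | ∃ 𝒩 : Set (Set X), IsNbhdBasisAt 𝒩 x ∧ #𝒩 = c}

end Defs

/-- The cs*-character of a space (`1` for the empty space). -/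
noncomputable def csStarChar (X : Type u) [TopologicalSpace X] : Cardinal.{u} :=
  max 1 (⨆ x : X, csStarCharAt x)

/-- The cs-character of a space (`1` for the empty space). -/
noncomputable def csChar (X : Type u) [TopologicalSpace X] : Cardinal.{u} :=
  max 1 (⨆ x : X, csCharAt x)

/-- The sb-character of a space (`1` for the empty space). -/
noncomputable def sbChar (X : Type u) [TopologicalSpace X] : Cardinal.{u} :=
  max 1 (⨆ x : X, sbCharAt x)

/-- The character of a space (`1` for the empty space). -/
noncomputable def charCard (X : Type u) [TopologicalSpace X] : Cardinal.{u} :=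
  max 1 (⨆ x : X, charAt x)

/-- `X` has countable cs*-character: every point has a countable cs*-network. -/
def CountableCsStarChar (X : Type u) [TopologicalSpace X] : Prop :=
  ∀ x : X, ∃ 𝒩 : Set (Set X), 𝒩.Countable ∧ IsCsStarNetworkAt 𝒩 x

/-- `X` has countable sb-character: every point has a countable sb-network. -/
def CountableSbChar (X : Type u) [TopologicalSpace X] : Prop :=
  ∀ x : X, ∃ 𝒩 : Set (Set X), 𝒩.Countable ∧ IsSbNetworkAt 𝒩 x

/-- `X` carries the inductive topology with respect to the cover `𝒞`: a set is closed iff its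
trace on each `C ∈ 𝒞` is closed in the subspace `C`. -/
def InductiveTopology (X : Type u) [TopologicalSpace X] (𝒞 : Set (Set X)) : Prop :=
  ∀ F : Set X, IsClosed F ↔ ∀ C ∈ 𝒞, IsClosed (Subtype.val ⁻¹' F : Set C)

/-- A `k_ω`-space: inductive topology w.r.t. a countable cover by compact sets. -/
def IsKOmegaSpace (X : Type u) [TopologicalSpace X] : Prop :=
  ∃ 𝒞 : Set (Set X), 𝒞.Countable ∧ ⋃₀ 𝒞 = Set.univ ∧ (∀ C ∈ 𝒞, IsCompact C) ∧
    InductiveTopology X 𝒞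

/-- An `MK_ω`-space: inductive topology w.r.t. a countable cover by compact metrizable sets. -/
def IsMKOmegaSpace (X : Type u) [TopologicalSpace X] : Prop :=
  ∃ 𝒞 : Set (Set X), 𝒞.Countable ∧ ⋃₀ 𝒞 = Set.univ ∧
    (∀ C ∈ 𝒞, IsCompact C ∧ TopologicalSpace.MetrizableSpace C) ∧ InductiveTopology X 𝒞

/-- An `M_ω`-space: inductive topology w.r.t. a countable cover by closed metrizable sets. -/
def IsMOmegaSpace (X : Type u) [TopologicalSpace X] : Prop :=
  ∃ 𝒞 : Set (Set X), 𝒞.Countable ∧ ⋃₀ 𝒞 = Set.univ ∧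
    (∀ C ∈ 𝒞, IsClosed C ∧ TopologicalSpace.MetrizableSpace C) ∧ InductiveTopology X 𝒞

/-- An α₄-space: given countably many sequences converging to a common point `x`, some sequence
converging to `x` meets infinitely many of them. -/
def Alpha4Space (X : Type u) [TopologicalSpace X] : Prop :=
  ∀ (x : X) (S : ℕ → Set X), (∀ n, ConvSeqTo (S n) x) →
    ∃ T : Set X, ConvSeqTo T x ∧ {n | (T ∩ S n).Nonempty}.Infinite

/-- An α₇-space: given countably many sequences converging to a common point `x`, some sequence
converging to some point `y` meets infinitely many of them. -/
def Alpha7Space (X : Type u) [TopologicalSpace X] : Prop :=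
  ∀ (x : X) (S : ℕ → Set X), (∀ n, ConvSeqTo (S n) x) →
    ∃ (T : Set X) (y : X), ConvSeqTo T y ∧ {n | (T ∩ S n).Nonempty}.Infinite

/-- The small cardinal 𝔭: the smallest cardinality of a family of infinite subsets of ω closed
under finite intersections and having no infinite pseudo-intersection. -/
noncomputable def pCard : Cardinal.{0} :=
  sInf {c | ∃ F : Set (Set ℕ), (∀ A ∈ F, A.Infinite) ∧ (∀ A ∈ F, ∀ B ∈ F, A ∩ B ∈ F) ∧
    (¬ ∃ I : Set ℕ, I.Infinite ∧ ∀ A ∈ F, (I \ A).Finite) ∧ #F = c}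

/-- The small cardinal 𝔡: the smallest cardinality of a dominating family in `ℕ → ℕ`. -/
noncomputable def dCard : Cardinal.{0} :=
  sInf {c | ∃ D : Set (ℕ → ℕ), (∀ f : ℕ → ℕ, ∃ g ∈ D, ∀ n, f n ≤ g n) ∧ #D = c}

/-- The pseudocharacter of `X`: the least `c` such that every singleton is the intersection of a
family of at most `c` open sets. -/
noncomputable def psiChar (X : Type u) [TopologicalSpace X] : Cardinal.{u} :=
  sInf {c | ∀ x : X, ∃ 𝒰 : Set (Set X), (∀ U ∈ 𝒰, IsOpen U) ∧ ⋂₀ 𝒰 = {x} ∧ #𝒰 ≤ c}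

/-- The weight of `X`: the smallest cardinality of a base of the topology. -/
noncomputable def weightCard (X : Type u) [TopologicalSpace X] : Cardinal.{u} :=
  sInf {c | ∃ B : Set (Set X), TopologicalSpace.IsTopologicalBasis B ∧ #B = c}

/-- Transfinite iteration of the sequential closure: `A^{(α)}`. -/
noncomputable def seqClIter {X : Type u} [TopologicalSpace X] (A : Set X) :
    Ordinal.{0} → Set X
  | α => A ∪ ⋃ β : {β : Ordinal.{0} // β < α}, seqClosure (seqClIter A β.1)
termination_by α => α
decreasing_by exact β.2

/-- The sequential order of `X`: the least ordinal `α` with `A^{(α+1)} = A^{(α)}` for all `A`. -/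
noncomputable def seqOrder (X : Type u) [TopologicalSpace X] : Ordinal.{0} :=
  sInf {α | ∀ A : Set X, seqClIter A (α + 1) = seqClIter A α}

/-- The cardinality `|[κ]^{≤ω}|` of the family of countable subsets of (a set of cardinality)
`κ`. -/
noncomputable def countableSubsetsCard (c : Cardinal.{u}) : Cardinal.{u} :=
  #{A : Set (Quotient.out c) // A.Countable}

/-- The space `𝕃 = {(0,0)} ∪ {(1/n, 1/(nm)) : n,m ∈ ℕ}` as a subspace of `ℝ²`. -/
def LSpace : Set (ℝ × ℝ) :=
  {(0, 0)} ∪ {p | ∃ n m : ℕ, 0 < n ∧ 0 < m ∧ p = (1 / (n : ℝ), 1 / ((n : ℝ) * (m : ℝ)))}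

/-
The sets `N ∋ 1` that are sequential barriers at `1` for sequences inside `F⁻¹F` form a filter,
and the members of the sb-network that are such barriers generate a countably generated filter
`𝓕` squeezed between it and `𝓝 1`. If `u n → z` in `F`, then `z⁻¹ u n` is a sequence in `F⁻¹F`
converging to `1`, hence (by T1) it is eventually in every member of `𝓕`. Diagonalising along an
antitone basis of `𝓕` shows that the sequential space `F` is Fréchet–Urysohn, and then
sequences suffice to show that `𝓝 z` is the pullback of `𝓕` under `w ↦ z⁻¹ w`.
-/

section SeqBarrier

variable {X : Type*} [TopologicalSpace X]

def IsSeqBarrierWithin (A B : Set X) (x : X) : Prop :=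
  ∀ S ⊆ A, ConvSeqTo S x → (S \ B).Finite

def seqBarrierFilterWithin (A : Set X) (x : X) : Filter X where
  sets := {B | x ∈ B ∧ IsSeqBarrierWithin A B x}
  univ_sets := ⟨mem_univ x, fun S _ _ => by simp⟩
  sets_of_superset := fun ⟨hxB, hB⟩ hBC =>
    ⟨hBC hxB, fun S hSA hS => (hB S hSA hS).subset (sdiff_subset_sdiff_right hBC)⟩
  inter_sets := fun ⟨hxB, hB⟩ ⟨hxC, hC⟩ =>
    ⟨⟨hxB, hxC⟩, fun S hSA hS => by rw [sdiff_inter]; exact (hB S hSA hS).union (hC S hSA hS)⟩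

theorem convSeqTo_range_diff [T1Space X] {v : ℕ → X} {x : X} (hv : Tendsto v atTop (𝓝 x))
    {B : Set X} (hxB : x ∈ B) (hvB : ∃ᶠ n in atTop, v n ∉ B) : ConvSeqTo (range v \ B) x := by
  refine ⟨(countable_range v).mono sdiff_subset, fun hfin => ?_, fun U hU => ?_⟩
  · have hvS : ∀ᶠ n in atTop, v n ∉ range v \ B :=
      hv (hfin.isClosed.isOpen_compl.mem_nhds fun hx => hx.2 hxB)
    obtain ⟨n, hnB, hnS⟩ := (hvB.and_eventually hvS).exists
    exact hnS ⟨mem_range_self n, hnB⟩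
  · have hvU : (v ⁻¹' U)ᶜ.Finite := by
      rw [← mem_cofinite, Nat.cofinite_eq_atTop]
      exact hv hU
    refine (hvU.image v).subset ?_
    rintro _ ⟨⟨⟨n, rfl⟩, -⟩, hnU⟩
    exact mem_image_of_mem v hnU

theorem tendsto_seqBarrierFilterWithin [T1Space X] {A : Set X} {x : X} {v : ℕ → X}
    (hv : Tendsto v atTop (𝓝 x)) (hvA : ∀ n, v n ∈ A) :
    Tendsto v atTop (seqBarrierFilterWithin A x) := by
  rintro B ⟨hxB, hB⟩
  by_contra hvB
  have hS := convSeqTo_range_diff hv hxB (not_eventually.mp hvB)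
  exact hS.2.1 <| (hB _ (sdiff_subset.trans (range_subset_iff.2 hvA)) hS).subset
    fun y hy => ⟨hy, hy.2⟩

end SeqBarrier

theorem tendsto_nhds_of_seq_tendsto {X Y : Type*} [TopologicalSpace X] [FrechetUrysohnSpace X]
    {f : X → Y} {a : X} {l : Filter Y}
    (h : ∀ u : ℕ → X, Tendsto u atTop (𝓝 a) → Tendsto (f ∘ u) atTop l) :
    Tendsto f (𝓝 a) l := by
  intro B hB
  by_contra ha
  have ha' : a ∈ closure (f ⁻¹' B)ᶜ := by
    rwa [closure_compl, mem_compl_iff, mem_interior_iff_mem_nhds]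
  obtain ⟨u, huB, hua⟩ := mem_closure_iff_seq_limit.1 ha'
  obtain ⟨n, hn⟩ := ((h u hua).eventually_mem hB).exists
  exact huB n hn

section Group

variable {G : Type*} [Group G] [TopologicalSpace G] [IsTopologicalGroup G] [T1Space G]
  {F : Set G} {𝓕 : Filter G}

theorem tendsto_inv_mul_of_seqBarrierFilterWithin_le
    (h𝓑 : seqBarrierFilterWithin (F⁻¹ * F) 1 ≤ 𝓕) {z : F} {u : ℕ → F}
    (hu : Tendsto u atTop (𝓝 z)) : Tendsto (fun n => (z : G)⁻¹ * u n) atTop 𝓕 := by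
  have hv : Tendsto (fun n => (z : G)⁻¹ * u n) atTop (𝓝 1) := by
    simpa using (tendsto_subtype_rng.1 hu).const_mul (z : G)⁻¹
  exact (tendsto_seqBarrierFilterWithin hv
    fun n => mul_mem_mul (inv_mem_inv.2 z.2) (u n).2).mono_right h𝓑

variable (h𝓕 : 𝓕 ≤ 𝓝 1) (h𝓑 : seqBarrierFilterWithin (F⁻¹ * F) 1 ≤ 𝓕)
include h𝓕 h𝓑

theorem frechetUrysohnSpace_of_seqBarrierFilterWithin_le [SequentialSpace F]
    [𝓕.IsCountablyGenerated] : FrechetUrysohnSpace F := by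
  obtain ⟨M, hM⟩ := 𝓕.exists_antitone_basis
  have hseq (A : Set F) : IsSeqClosed (seqClosure A) := by
    intro u p hu hup
    choose T hTA hT using hu
    have hj (n : ℕ) : ∃ j, (u n : G)⁻¹ * T n j ∈ M n :=
      (tendsto_inv_mul_of_seqBarrierFilterWithin_le h𝓑 (hT n)).eventually_mem (hM.mem n)
        |>.exists
    choose j hj using hj
    have hjM : Tendsto (fun n => (u n : G)⁻¹ * T n (j n)) atTop (𝓝 1) :=
      (hM.tendsto hj).mono_right h𝓕
    refine ⟨fun n => T n (j n), fun n => hTA n (j n), tendsto_subtype_rng.2 ?_⟩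
    simpa using (tendsto_subtype_rng.1 hup).mul hjM
  exact ⟨fun A => closure_minimal subset_seqClosure (hseq A).isClosed⟩

theorem nhds_eq_comap_inv_mul_of_seqBarrierFilterWithin_le [FrechetUrysohnSpace F] (z : F) :
    𝓝 z = comap (fun w : F => (z : G)⁻¹ * w) 𝓕 := by
  have hind : IsInducing (fun w : F => (z : G)⁻¹ * w) :=
    (Homeomorph.mulLeft (z : G)⁻¹).isInducing.comp IsInducing.subtypeVal
  refine le_antisymm (tendsto_nhds_of_seq_tendsto (f := fun w : F => (z : G)⁻¹ * w) fun u hu =>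
    tendsto_inv_mul_of_seqBarrierFilterWithin_le h𝓑 hu).le_comap ?_
  calc comap (fun w : F => (z : G)⁻¹ * w) 𝓕
      ≤ comap (fun w : F => (z : G)⁻¹ * w) (𝓝 1) := comap_mono h𝓕
    _ = 𝓝 z := by rw [hind.nhds_eq_comap z, inv_mul_cancel]

theorem firstCountableTopology_of_seqBarrierFilterWithin_le [SequentialSpace F]
    [𝓕.IsCountablyGenerated] : FirstCountableTopology F := by
  have := frechetUrysohnSpace_of_seqBarrierFilterWithin_le h𝓕 h𝓑
  refine ⟨fun z => ?_⟩
  rw [nhds_eq_comap_inv_mul_of_seqBarrierFilterWithin_le h𝓕 h𝓑 z]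
  infer_instance

end Group

/-- If `F` is a sequential subspace of a T1 topological group `G` and the subspace `F⁻¹F` has a
countable sb-network at the unit `e`, then `F` is first countable. -/
theorem firstCountable_of_sbNetwork_at_one (G : Type u) [Group G] [TopologicalSpace G]
    [IsTopologicalGroup G] [T1Space G] (F : Set G) [SequentialSpace F]
    (h : ∃ 𝒩 : Set (Set G), 𝒩.Countable ∧ ∀ U ∈ 𝓝 (1 : G), ∃ N ∈ 𝒩,
      (1 : G) ∈ N ∧ N ⊆ U ∧ N ⊆ F⁻¹ * F ∧
      ∀ S : Set G, S ⊆ F⁻¹ * F → ConvSeqTo S 1 → (S \ N).Finite) :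
    FirstCountableTopology F := by
  obtain ⟨𝒩, h𝒩, hnet⟩ := h
  let 𝓕 := generate {N ∈ 𝒩 | N ∈ seqBarrierFilterWithin (F⁻¹ * F) (1 : G)}
  have : 𝓕.IsCountablyGenerated := ⟨⟨_, h𝒩.mono (sep_subset _ _), rfl⟩⟩
  refine firstCountableTopology_of_seqBarrierFilterWithin_le (𝓕 := 𝓕) (fun U hU => ?_)
    (le_generate_iff.2 fun N hN => hN.2)
  obtain ⟨N, hN𝒩, hN1, hNU, -, hNbar⟩ := hnet U hU
  exact mem_of_superset (mem_generate_of_mem ⟨hN𝒩, hN1, hNbar⟩) hNU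
end

section
/- Let G be a T1 topological group with identity e and let F ⊆ G be a subspace which, in its subspace topology, is sequential and an α₇-space. If the subspace F⁻¹F = {x⁻¹y : x, y ∈ F} of G has countable cs-character at e, then F has countable sb-character. -/
open Set Filter Topology Cardinal Pointwise

universe u v

/-!
Fix `x ∈ F` and enumerate the cs-network as `N₀, N₁, …`. The sb-network at `x` consists of the
sets `{x} ∪ {z ∈ F | x⁻¹z ∈ ⋃_{(i,j) ∈ Φ} NᵢNⱼ}` for finite `Φ`. Given a neighbourhood `U` of
`x`, pick `W ∈ 𝓝 1` with `xWW ⊆ U` and let `Φₙ` be the pairs `(i, j)` with `i, j ≤ n` and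
`Nᵢ, Nⱼ ⊆ W`. If no `Φₙ` gave a sequential barrier, there would be sequences `Sₙ → x` avoiding the
`n`-th set, with `x⁻¹Sₙ` eventually in some `N_{a(n)} ⊆ W`. The α₇ property yields points
`zᵣ ∈ S_{m(r)}` converging in `F`, with `m(r+1) ≥ a(m(r))`, so the quotients
`qᵣ = zᵣ⁻¹z_{r+1} ∈ F⁻¹F` converge to `1` and are eventually in a single `Nⱼ ⊆ W`. For large `r`
the identity `x⁻¹z_{r+1} = (x⁻¹zᵣ)qᵣ` then puts `z_{r+1}` into the set that `S_{m(r+1)}` avoids.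
-/

section ConvSeq

variable {X : Type*} [TopologicalSpace X] {S T : Set X} {x : X}

def IsCsNetworkWithinAt (𝒩 : Set (Set X)) (A : Set X) (x : X) : Prop :=
  ∀ U ∈ 𝓝 x, ∀ S ⊆ A, ConvSeqTo S x → ∃ N ∈ 𝒩, N ⊆ U ∧ (S \ N).Finite

lemma IsCsNetworkWithinAt.mono {𝒩 𝒩' : Set (Set X)} {A : Set X}
    (h : IsCsNetworkWithinAt 𝒩 A x) (h𝒩 : 𝒩 ⊆ 𝒩') : IsCsNetworkWithinAt 𝒩' A x :=
  fun U hU S hSA hS =>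
    let ⟨N, hN, hNU, hSN⟩ := h U hU S hSA hS
    ⟨N, h𝒩 hN, hNU, hSN⟩

namespace ConvSeqTo

lemma mono (h : ConvSeqTo S x) (hTS : T ⊆ S) (hT : T.Infinite) : ConvSeqTo T x :=
  ⟨h.1.mono hTS, hT, fun U hU => (h.2.2 U hU).subset (sdiff_subset_sdiff_left hTS)⟩

lemma inter_of_finite_diff (h : ConvSeqTo S x) {A : Set X} (hA : (S \ A).Finite) :
    ConvSeqTo (S ∩ A) x :=
  h.mono inter_subset_left (by simpa only [sdiff_sdiff_right_self] using h.2.1.sdiff hA)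

lemma image {Y : Type*} [TopologicalSpace Y] {f : X → Y} (h : ConvSeqTo S x)
    (hf : Continuous f) (hinj : Function.Injective f) : ConvSeqTo (f '' S) (f x) := by
  refine ⟨h.1.image f, (infinite_image_iff hinj.injOn).2 h.2.1, fun U hU => ?_⟩
  rw [← image_sdiff_preimage]
  exact (h.2.2 _ (hf.continuousAt.preimage_mem_nhds hU)).image f

lemma tendsto_of_finite_fibers (hT : ConvSeqTo T x) {u : ℕ → X} (huT : ∀ n, u n ∈ T)
    (hu : ∀ z, (u ⁻¹' {z}).Finite) : Tendsto u atTop (𝓝 x) := by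
  rw [← Nat.cofinite_eq_atTop]
  intro U hU
  rw [mem_map, mem_cofinite, ← preimage_compl]
  exact ((hT.2.2 U hU).preimage' fun z _ => hu z).subset fun n hn => ⟨huT n, hn⟩

end ConvSeqTo

lemma exists_convSeqTo_subset_compl_of_not_isSeqBarrierAt {B : Set X}
    (h : ¬ IsSeqBarrierAt B x) : ∃ S ⊆ Bᶜ, ConvSeqTo S x := by
  obtain ⟨S, hS, hSB⟩ : ∃ S, ConvSeqTo S x ∧ (S \ B).Infinite := by
    simpa [IsSeqBarrierAt] using h
  exact ⟨S \ B, sdiff_subset_compl _ _, hS.mono sdiff_subset hSB⟩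

lemma exists_pointFinite_convSeqTo_subset {S : ℕ → Set X} (hS : ∀ n, ConvSeqTo (S n) x) :
    ∃ S' : ℕ → Set X, (∀ n, S' n ⊆ S n) ∧ (∀ n, ConvSeqTo (S' n) x) ∧
      ∀ z, {n | z ∈ S' n}.Finite := by
  obtain ⟨e, he⟩ := countable_iff_exists_injOn.1 (countable_iUnion fun n => (hS n).1)
  refine ⟨fun n => S n ∩ {z | n ≤ e z}, fun n => inter_subset_left, fun n => ?_,
    fun z => (finite_Iic (e z)).subset fun n hn => hn.2⟩
  refine (hS n).inter_of_finite_diff (Finite.of_finite_image ((finite_Iio n).subset ?_)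
    (he.mono fun z hz => mem_iUnion.2 ⟨n, hz.1⟩))
  rintro _ ⟨z, ⟨-, hz⟩, rfl⟩
  exact not_le.1 (show ¬ n ≤ e z from hz)

section T1

variable [T1Space X] {u : ℕ → X}

lemma finite_preimage_of_tendsto (hu : Tendsto u atTop (𝓝 x)) {s : Set X} (hs : s.Finite)
    (hx : x ∉ s) : (u ⁻¹' s).Finite := by
  have : u ⁻¹' sᶜ ∈ cofinite := by
    rw [Nat.cofinite_eq_atTop]
    exact hu (hs.isClosed.isOpen_compl.mem_nhds hx)
  rwa [mem_cofinite, preimage_compl, compl_compl] at this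

lemma convSeqTo_range_of_tendsto (hu : Tendsto u atTop (𝓝 x)) (hne : ∀ n, u n ≠ x) :
    ConvSeqTo (range u) x := by
  refine ⟨countable_range u, fun hfin => infinite_univ (α := ℕ) ?_, fun U hU => ?_⟩
  · simpa using finite_preimage_of_tendsto hu hfin (by simpa using hne)
  · have : (u ⁻¹' U)ᶜ.Finite := by
      rw [← mem_cofinite, Nat.cofinite_eq_atTop]
      exact hu hU
    exact (this.image u).subset (by rintro _ ⟨⟨n, rfl⟩, hn⟩; exact ⟨n, hn, rfl⟩)

end T1

end ConvSeq

lemma Alpha7Space.exists_tendsto {X : Type u} [TopologicalSpace X] (h : Alpha7Space X) {x : X}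
    {S : ℕ → Set X} (hS : ∀ n, ConvSeqTo (S n) x) (g : ℕ → ℕ) :
    ∃ (m : ℕ → ℕ) (z : ℕ → X) (y : X), StrictMono m ∧ (∀ r, g (m r) ≤ m (r + 1)) ∧
      (∀ r, z r ∈ S (m r)) ∧ (∀ r, z (r + 1) ≠ z r) ∧ Tendsto z atTop (𝓝 y) := by
  obtain ⟨S', hS'S, hS', hS'fin⟩ := exists_pointFinite_convSeqTo_subset hS
  obtain ⟨T, y, hT, hI⟩ := h x S' hS'
  set I := {n | (T ∩ S' n).Nonempty}
  have : Nonempty X := ⟨x⟩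
  choose! p hpT hpS using fun n (hn : n ∈ I) => hn
  have hp_fibers : ∀ w, {n | n ∈ I ∧ p n = w}.Finite := fun w =>
    (hS'fin w).subset fun n ⟨hn, hpn⟩ => hpn ▸ hpS n hn
  have hnext : ∀ k, ∃ n ∈ I, k < n ∧ g k ≤ n ∧ p n ≠ p k := by
    intro k
    obtain ⟨n, hnI, hn⟩ :=
      (hI.sdiff ((finite_Iic (max k (g k))).union (hp_fibers (p k)))).nonempty
    simp only [mem_union, mem_Iic, mem_ofPred_eq, not_or, not_and_or, not_le, max_lt_iff] at hn
    exact ⟨n, hnI, hn.1.1, hn.1.2.le, hn.2.resolve_left (not_not.2 hnI)⟩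
  choose next hnextI hnext_lt hnext_g hnext_ne using hnext
  set m : ℕ → ℕ := fun r => next^[r + 1] 0
  have hm_succ : ∀ r, m (r + 1) = next (m r) := fun r =>
    Function.iterate_succ_apply' next (r + 1) 0
  have hmI : ∀ r, m r ∈ I := fun r => by
    simp only [m, Function.iterate_succ_apply']
    exact hnextI _
  have hm : StrictMono m := strictMono_nat_of_lt_succ fun r => hm_succ r ▸ hnext_lt _
  refine ⟨m, p ∘ m, y, hm, fun r => hm_succ r ▸ hnext_g _, fun r => hS'S _ (hpS _ (hmI r)),
    fun r => by simpa only [Function.comp, hm_succ] using hnext_ne (m r), hT.tendsto_of_finite_fibers (fun r => hpT _ (hmI r)) ?_⟩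
  intro w
  exact ((hp_fibers w).preimage hm.injective.injOn).subset fun r hr => ⟨hmI r, hr⟩

section TopologicalGroup

variable {G : Type u} [Group G] [TopologicalSpace G] [IsTopologicalGroup G] {F : Set G}
  {f : ℕ → Set G}

def productBarrier (f : ℕ → Set G) (x : F) (Φ : Finset (ℕ × ℕ)) : Set F :=
  insert x {z | ∃ P ∈ Φ, (x : G)⁻¹ * z ∈ f P.1 * f P.2}

lemma isEmbedding_inv_mul (x : F) : IsEmbedding fun z : F => (x : G)⁻¹ * z :=
  (Homeomorph.mulLeft (x : G)⁻¹).isEmbedding.comp IsEmbedding.subtypeVal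

lemma exists_nhds_one_forall_inv_mul_mem {x : F} {U : Set F} (hU : U ∈ 𝓝 x) :
    ∃ W ∈ 𝓝 (1 : G), ∀ z : F, (x : G)⁻¹ * z ∈ W * W → z ∈ U := by
  rw [(isEmbedding_inv_mul x).nhds_eq_comap, inv_mul_cancel] at hU
  obtain ⟨V, hV, hVU⟩ := mem_comap.1 hU
  obtain ⟨W, hW, hWV⟩ := exists_nhds_one_split hV
  refine ⟨W, hW, fun z hz => hVU ?_⟩
  obtain ⟨v, hv, w, hw, hvw⟩ := hz
  exact (show (x : G)⁻¹ * z ∈ V from hvw ▸ hWV v hv w hw)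

lemma IsCsNetworkWithinAt.exists_inv_mul_eventually_mem
    (hf : IsCsNetworkWithinAt (range f) (F⁻¹ * F) 1) {x : F} {S : Set F} (hS : ConvSeqTo S x)
    {W : Set G} (hW : W ∈ 𝓝 1) :
    ∃ a, f a ⊆ W ∧ (S \ {z | (x : G)⁻¹ * z ∈ f a}).Finite := by
  have hψ := isEmbedding_inv_mul x
  have hψS : ConvSeqTo ((fun z : F => (x : G)⁻¹ * z) '' S) 1 := by
    simpa using hS.image hψ.continuous hψ.injective
  obtain ⟨_, ⟨a, rfl⟩, haW, ha⟩ :=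
    hf W hW _ (by rintro _ ⟨z, -, rfl⟩; exact mul_mem_mul (inv_mem_inv.2 x.2) z.2) hψS
  refine ⟨a, haW, Finite.of_finite_image ?_ hψ.injective.injOn⟩
  rwa [← image_sdiff_preimage] at ha

lemma exists_inv_mul_mem_mul_of_alpha7Space [T1Space G] (h7 : Alpha7Space F)
    (hf : IsCsNetworkWithinAt (range f) (F⁻¹ * F) 1) {x : F} {W : Set G} (hW : W ∈ 𝓝 1)
    {a : ℕ → ℕ} (haW : ∀ n, f (a n) ⊆ W) {S : ℕ → Set F} (hS : ∀ n, ConvSeqTo (S n) x)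
    (hSa : ∀ n, ∀ z ∈ S n, (x : G)⁻¹ * z ∈ f (a n)) :
    ∃ n, ∃ z ∈ S n, ∃ i ≤ n, ∃ j ≤ n, f i ⊆ W ∧ f j ⊆ W ∧ (x : G)⁻¹ * z ∈ f i * f j := by
  obtain ⟨m, z, y, hm, hma, hzS, hz_ne, hzy⟩ := h7.exists_tendsto hS a
  set q : ℕ → G := fun r => (z r : G)⁻¹ * z (r + 1)
  have hq : Tendsto q atTop (𝓝 1) := by
    have hzy' := (continuous_subtype_val.tendsto y).comp hzy
    simpa using hzy'.inv.mul (hzy'.comp (tendsto_add_atTop_nat 1))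
  have hq_ne : ∀ r, q r ≠ 1 := fun r hr =>
    hz_ne r (Subtype.ext (inv_mul_eq_one.1 hr).symm)
  have hqF : range q ⊆ F⁻¹ * F := by
    rintro _ ⟨r, rfl⟩
    exact mul_mem_mul (inv_mem_inv.2 (z r).2) (z (r + 1)).2
  obtain ⟨_, ⟨j, rfl⟩, hjW, hj⟩ := hf W hW _ hqF (convSeqTo_range_of_tendsto hq hq_ne)
  have hq_mem : ∀ᶠ r in atTop, q r ∈ f j := by
    have := finite_preimage_of_tendsto hq hj fun h => h.1.elim fun r hr => hq_ne r hr
    rw [← Nat.cofinite_eq_atTop]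
    exact this.subset fun r hr => ⟨mem_range_self r, hr⟩
  obtain ⟨r, hjr, hr⟩ := ((eventually_ge_atTop j).and hq_mem).exists
  refine ⟨m (r + 1), z (r + 1), hzS _, a (m r), hma r, j, ?_, haW _, hjW, ?_⟩
  · exact hjr.trans ((Nat.le_succ r).trans (hm.id_le _))
  · have : (x : G)⁻¹ * z (r + 1) = ((x : G)⁻¹ * z r) * q r := by
      simp only [q, mul_assoc, mul_inv_cancel_left]
    exact this ▸ mul_mem_mul (hSa _ _ (hzS r)) hr

lemma exists_productBarrier_subset_isSeqBarrierAt [T1Space G] (h7 : Alpha7Space F)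
    (hf : IsCsNetworkWithinAt (range f) (F⁻¹ * F) 1) (x : F) {U : Set F} (hU : U ∈ 𝓝 x) :
    ∃ Φ, productBarrier f x Φ ⊆ U ∧ IsSeqBarrierAt (productBarrier f x Φ) x := by
  classical
  obtain ⟨W, hW, hWU⟩ := exists_nhds_one_forall_inv_mul_mem hU
  set Φ : ℕ → Finset (ℕ × ℕ) := fun n =>
    {P ∈ Finset.range (n + 1) ×ˢ Finset.range (n + 1) | f P.1 ⊆ W ∧ f P.2 ⊆ W}
  have hΦU : ∀ n, productBarrier f x (Φ n) ⊆ U := by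
    rintro n z (rfl | ⟨P, hP, hz⟩)
    · exact mem_of_mem_nhds hU
    · simp only [Φ, Finset.mem_filter] at hP
      exact hWU z (mul_subset_mul hP.2.1 hP.2.2 hz)
  suffices ∃ n, IsSeqBarrierAt (productBarrier f x (Φ n)) x from
    let ⟨n, hn⟩ := this
    ⟨Φ n, hΦU n, hn⟩
  by_contra! hnot
  choose S hSB hS using fun n => exists_convSeqTo_subset_compl_of_not_isSeqBarrierAt (hnot n)
  choose a haW ha using fun n => hf.exists_inv_mul_eventually_mem (hS n) hW
  obtain ⟨n, z, ⟨hzS, -⟩, i, hi, j, hj, hiW, hjW, hz⟩ := exists_inv_mul_mem_mul_of_alpha7Space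
    h7 hf hW haW (fun n => (hS n).inter_of_finite_diff (ha n)) fun n z hz => hz.2
  refine hSB n hzS (Or.inr ⟨(i, j), ?_, hz⟩)
  simp only [Φ, Finset.mem_filter, Finset.mem_product, Finset.mem_range]
  exact ⟨⟨by omega, by omega⟩, hiW, hjW⟩

end TopologicalGroup

theorem countableSbChar_of_csNetwork_at_one_general (G : Type u) [Group G] [TopologicalSpace G]
    [IsTopologicalGroup G] [T1Space G] (F : Set G) (ha7 : Alpha7Space F)
    (hcs : ∃ 𝒩 : Set (Set G), 𝒩.Countable ∧ (∀ N ∈ 𝒩, N ⊆ F⁻¹ * F) ∧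
      ∀ U ∈ 𝓝 (1 : G), ∀ S : Set G, S ⊆ F⁻¹ * F → ConvSeqTo S 1 →
        ∃ N ∈ 𝒩, N ⊆ U ∧ (S \ N).Finite) :
    CountableSbChar F := by
  obtain ⟨𝒩, h𝒩, -, hcs⟩ := hcs
  obtain ⟨f, h𝒩f⟩ := countable_iff_exists_subset_range.1 h𝒩
  have hf : IsCsNetworkWithinAt (range f) (F⁻¹ * F) 1 := IsCsNetworkWithinAt.mono hcs h𝒩f
  intro x
  refine ⟨range (productBarrier f x), countable_range _, fun U hU => ?_⟩
  obtain ⟨Φ, hΦU, hΦ⟩ := exists_productBarrier_subset_isSeqBarrierAt ha7 hf x hU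
  exact ⟨_, mem_range_self Φ, mem_insert x _, hΦU, hΦ⟩

/-- If `F` is a sequential α₇-subspace of a T1 topological group `G` and the subspace `F⁻¹F` has
a countable cs-network at the unit `e`, then `F` has countable sb-character. -/
theorem countableSbChar_of_csNetwork_at_one (G : Type u) [Group G] [TopologicalSpace G]
    [IsTopologicalGroup G] [T1Space G] (F : Set G) [SequentialSpace F] (ha7 : Alpha7Space F)
    (hcs : ∃ 𝒩 : Set (Set G), 𝒩.Countable ∧ (∀ N ∈ 𝒩, N ⊆ F⁻¹ * F) ∧
      ∀ U ∈ 𝓝 (1 : G), ∀ S : Set G, S ⊆ F⁻¹ * F → ConvSeqTo S 1 →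
        ∃ N ∈ 𝒩, N ⊆ U ∧ (S \ N).Finite) :
    CountableSbChar F :=
  countableSbChar_of_csNetwork_at_one_general G F ha7 hcs
end

section
/- If a sequential T1 topological group G contains a closed topological copy of the space 𝕃 = {(0,0)} ∪ {(1/n, 1/(nm)) : n, m ∈ ℕ} with the subspace topology inherited from ℝ², then G is an α₇-space. -/
open Set Filter Topology Cardinal Pointwise

universe u v

/-! Enumerate each `S n` as a sequence `s n ⟶ x` and put `g n m = s n m * x⁻¹ ⟶ 1`. Translating
the `n`-th column of the closed copy `f` of `𝕃` by `g n` gives points `g n m * f (pt n m)`; those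
different from `f origin` accumulate at `f origin`, so, `G` being sequential, some sequence of them
converges to a point outside their set. Its column indices cannot stay bounded, since a column of
`𝕃` has no limit in `𝕃` and `f` is a closed embedding. So they tend to infinity, where `f ∘ pt`
converges to `f origin`; dividing it out shows that `g`, hence `s`, converges along these indices,
which gives a convergent sequence meeting infinitely many `S n`. -/

namespace LSpace

lemma pt_mem (n m : ℕ) :
    ((1 / ((n : ℝ) + 1), 1 / (((n : ℝ) + 1) * ((m : ℝ) + 1))) : ℝ × ℝ) ∈ LSpace :=
  Or.inr ⟨n + 1, m + 1, n.succ_pos, m.succ_pos, by push_cast; rfl⟩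

/-- `pt n m` is the point `(1/(n+1), 1/((n+1)(m+1)))`: the indices are shifted so that they
range over all of `ℕ`. -/
noncomputable def pt (n m : ℕ) : LSpace := ⟨_, pt_mem n m⟩

def origin : LSpace := ⟨(0, 0), Or.inl rfl⟩

lemma tendsto_pt_origin {ι : Type*} {l : Filter ι} {a b : ι → ℕ}
    (ha : Tendsto a l atTop) : Tendsto (fun i => pt (a i) (b i)) l (𝓝 origin) := by
  have hfst : Tendsto (fun i => 1 / ((a i : ℝ) + 1)) l (𝓝 0) :=
    (tendsto_one_div_add_atTop_nhds_zero_nat (𝕜 := ℝ)).comp ha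
  have hsnd : Tendsto (fun i => 1 / (((a i : ℝ) + 1) * ((b i : ℝ) + 1))) l (𝓝 0) := by
    refine squeeze_zero (fun i => by positivity) (fun i => ?_) hfst
    exact one_div_le_one_div_of_le (by positivity) (le_mul_of_one_le_right (by positivity)
      (by simp))
  exact tendsto_subtype_rng.mpr (hfst.prodMk_nhds hsnd)

lemma not_tendsto_pt_column {ι : Type*} {l : Filter ι} [l.NeBot] {b : ι → ℕ} (n : ℕ)
    (hb : Tendsto b l atTop) (y : LSpace) : ¬ Tendsto (fun i => pt n (b i)) l (𝓝 y) := by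
  intro hy
  have hsnd : Tendsto (fun i => 1 / (((n : ℝ) + 1) * ((b i : ℝ) + 1))) l (𝓝 0) := by
    have hden : Tendsto (fun i => ((n : ℝ) + 1) * ((b i : ℝ) + 1)) l atTop :=
      ((tendsto_natCast_atTop_atTop.comp hb).atTop_add tendsto_const_nhds).const_mul_atTop
        (by positivity)
    simpa only [one_div, Function.comp_def] using tendsto_inv_atTop_zero.comp hden
  have hlim : (y : ℝ × ℝ) = (1 / ((n : ℝ) + 1), 0) :=
    tendsto_nhds_unique ((continuous_subtype_val.tendsto y).comp hy)
      (tendsto_const_nhds.prodMk_nhds hsnd)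
  rcases y.2 with h0 | ⟨n', m', hn', hm', hy'⟩
  · have := congrArg Prod.fst (hlim.symm.trans h0)
    simp only [one_div, inv_eq_zero] at this
    exact absurd this (by positivity)
  · have := congrArg Prod.snd (hlim.symm.trans hy')
    simp [hn'.ne', hm'.ne'] at this

end LSpace

section ConvSeq

variable {X : Type*} [TopologicalSpace X]

lemma ConvSeqTo.exists_tendsto {S : Set X} {x : X} (hS : ConvSeqTo S x) :
    ∃ s : ℕ → X, (∀ m, s m ∈ S) ∧ Tendsto s atTop (𝓝 x) := by
  let e := hS.2.1.natEmbedding S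
  refine ⟨fun m => e m, fun m => (e m).2, ?_⟩
  rw [← Nat.cofinite_eq_atTop]
  intro U hU
  simp only [mem_map, mem_cofinite]
  refine ((hS.2.2 U hU).preimage ?_).subset fun m hm => ⟨(e m).2, hm⟩
  exact (Subtype.val_injective.comp e.injective).injOn

lemma convSeqTo_range {u : ℕ → X} {y : X} (hu : Tendsto u atTop (𝓝 y))
    (hinf : (range u).Infinite) : ConvSeqTo (range u) y := by
  refine ⟨countable_range u, hinf, fun U hU => ?_⟩
  have hfin : (u ⁻¹' U)ᶜ.Finite := by
    simpa only [← Nat.cofinite_eq_atTop, mem_map, mem_cofinite] using hu hU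
  refine (hfin.image u).subset ?_
  rintro _ ⟨⟨k, rfl⟩, hk⟩
  exact ⟨k, hk, rfl⟩

/-- If the range of `u` is finite, one of its points lies in infinitely many `S n`, and any such
`S n` will do. -/
lemma exists_convSeqTo_inter_nonempty_infinite {S : ℕ → Set X} {x : X}
    (hS : ∀ n, ConvSeqTo (S n) x) {u : ℕ → X} {a : ℕ → ℕ} {y : X}
    (hu : Tendsto u atTop (𝓝 y)) (ha : Tendsto a atTop atTop) (huS : ∀ k, u k ∈ S (a k)) :
    ∃ (T : Set X) (y : X), ConvSeqTo T y ∧ {n | (T ∩ S n).Nonempty}.Infinite := by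
  have hmeet : {n | (range u ∩ S n).Nonempty}.Infinite :=
    (infinite_of_not_bddAbove (not_bddAbove_of_tendsto_atTop ha)).mono
      (by rintro _ ⟨k, rfl⟩; exact ⟨u k, mem_range_self k, huS k⟩)
  by_cases hfin : (range u).Finite
  · obtain ⟨v, -, hv⟩ : ∃ v ∈ range u, {n | v ∈ S n}.Infinite := by
      by_contra! h
      refine hmeet ((hfin.biUnion h).subset ?_)
      rintro n ⟨v, hvu, hvS⟩
      exact mem_biUnion hvu hvS
    obtain ⟨n₀, hn₀⟩ := hv.nonempty
    exact ⟨S n₀, x, hS n₀, hv.mono fun n hn => ⟨v, hn₀, hn⟩⟩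
  · exact ⟨range u, y, convSeqTo_range hu hfin, hmeet⟩

end ConvSeq

lemma tendsto_atTop_or_exists_strictMono_const (v : ℕ → ℕ) :
    Tendsto v atTop atTop ∨ ∃ (m : ℕ) (φ : ℕ → ℕ), StrictMono φ ∧ ∀ k, v (φ k) = m := by
  by_cases h : ∃ m, {k | v k = m}.Infinite
  · obtain ⟨m, hm⟩ := h
    obtain ⟨φ, hφ, hφm⟩ := extraction_of_frequently_atTop (Nat.frequently_atTop_iff_infinite.mpr hm)
    exact Or.inr ⟨m, φ, hφ, hφm⟩
  · push Not at h
    left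
    rw [← Nat.cofinite_eq_atTop]
    exact Tendsto.cofinite_of_finite_preimage_singleton h

lemma Topology.IsClosedEmbedding.exists_tendsto_of_tendsto_comp {X Y ι : Type*}
    [TopologicalSpace X] [TopologicalSpace Y] {f : X → Y} (hf : IsClosedEmbedding f)
    {l : Filter ι} [l.NeBot] {u : ι → X} {y : Y} (h : Tendsto (fun i => f (u i)) l (𝓝 y)) :
    ∃ x, Tendsto u l (𝓝 x) := by
  obtain ⟨x, rfl⟩ := hf.isClosed_range.mem_of_tendsto h (.of_forall fun i => mem_range_self _)
  exact ⟨x, hf.isEmbedding.tendsto_nhds_iff.mpr h⟩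

section Fan

variable {G : Type*} [Group G] [TopologicalSpace G] [IsTopologicalGroup G]
  {f : LSpace → G} {g : ℕ → ℕ → G}

noncomputable def fanProd (f : LSpace → G) (g : ℕ → ℕ → G) (q : ℕ × ℕ) : G :=
  g q.1 q.2 * f (LSpace.pt q.1 q.2)

lemma not_tendsto_fanProd_column (hf : IsClosedEmbedding f)
    (hg : ∀ n, Tendsto (g n) atTop (𝓝 1)) {ι : Type*} {l : Filter ι} [l.NeBot] (n : ℕ)
    {b : ι → ℕ} (hb : Tendsto b l atTop) (w : G) :
    ¬ Tendsto (fun i => fanProd f g (n, b i)) l (𝓝 w) := by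
  intro hw
  have hcol : Tendsto (fun i => f (LSpace.pt n (b i))) l (𝓝 ((1 : G)⁻¹ * w)) :=
    (((hg n).comp hb).inv.mul hw).congr fun i => by simp [fanProd]
  obtain ⟨y, hy⟩ := hf.exists_tendsto_of_tendsto_comp hcol
  exact LSpace.not_tendsto_pt_column n hb y hy

lemma finite_setOf_fanProd_eq (hf : IsClosedEmbedding f)
    (hg : ∀ n, Tendsto (g n) atTop (𝓝 1)) (n : ℕ) (w : G) :
    {m | fanProd f g (n, m) = w}.Finite := by
  by_contra h
  obtain ⟨φ, hφ, hφw⟩ :=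
    extraction_of_frequently_atTop (Nat.frequently_atTop_iff_infinite.mpr h)
  exact not_tendsto_fanProd_column hf hg n hφ.tendsto_atTop w
    (tendsto_const_nhds.congr fun k => (hφw k).symm)

lemma origin_mem_closure_fanProd (hf : IsClosedEmbedding f)
    (hg : ∀ n, Tendsto (g n) atTop (𝓝 1)) :
    f LSpace.origin ∈ closure (fanProd f g '' {q | fanProd f g q ≠ f LSpace.origin}) := by
  set z := f LSpace.origin
  refine mem_closure_iff_nhds.mpr fun U hU => ?_
  have hmul : ∀ᶠ p : G × G in 𝓝 1 ×ˢ 𝓝 z, p.1 * p.2 ∈ U := by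
    rw [← nhds_prod_eq]
    exact continuous_mul.continuousAt (by simpa using hU)
  obtain ⟨P, hP, Q, hQ, hPQ⟩ := eventually_prod_iff.mp hmul
  obtain ⟨N, hN⟩ : ∃ N, ∀ m, Q (f (LSpace.pt N m)) := by
    have := (hf.continuous.tendsto _).comp
      (LSpace.tendsto_pt_origin (l := atTop ×ˢ ⊤) (b := Prod.snd) tendsto_fst) hQ
    exact (show ∀ᶠ n in atTop, ∀ m, Q (f (LSpace.pt n m)) from mem_prod_top.mp this).exists
  obtain ⟨m, hmP, hmz⟩ := ((hg N).eventually hP).and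
    (Nat.cofinite_eq_atTop ▸ (finite_setOf_fanProd_eq hf hg N z).eventually_cofinite_notMem)
    |>.exists
  exact ⟨fanProd f g (N, m), hPQ hmP (hN m), mem_image_of_mem _ hmz⟩

end Fan

theorem exists_tendsto_fan_of_isClosedEmbedding_LSpace {G : Type*} [Group G]
    [TopologicalSpace G] [IsTopologicalGroup G] [T1Space G] [SequentialSpace G]
    {f : LSpace → G} (hf : IsClosedEmbedding f) {g : ℕ → ℕ → G}
    (hg : ∀ n, Tendsto (g n) atTop (𝓝 1)) :
    ∃ (a b : ℕ → ℕ) (y : G),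
      Tendsto a atTop atTop ∧ Tendsto (fun k => g (a k) (b k)) atTop (𝓝 y) := by
  set z := f LSpace.origin
  set A := fanProd f g '' {q | fanProd f g q ≠ z}
  have hzA : z ∉ A := by
    rintro ⟨q, hq, hqz⟩
    exact hq hqz
  have hA : ¬ IsSeqClosed A := fun h =>
    hzA (h.isClosed.closure_subset (origin_mem_closure_fanProd hf hg))
  obtain ⟨u, y, huA, hu, hy⟩ :
      ∃ u : ℕ → G, ∃ y, (∀ k, u k ∈ A) ∧ Tendsto u atTop (𝓝 y) ∧ y ∉ A := by
    simpa [IsSeqClosed] using hA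
  choose q hqz hqu using huA
  rcases tendsto_atTop_or_exists_strictMono_const (fun k => (q k).1) with ha | ⟨n, φ, hφ, hφn⟩
  · have hpt := (hf.continuous.tendsto _).comp
      (LSpace.tendsto_pt_origin (b := fun k => (q k).2) ha)
    refine ⟨_, fun k => (q k).2, y * z⁻¹, ha, (hu.mul hpt.inv).congr fun k => ?_⟩
    simp [← hqu k, fanProd]
  · exfalso
    rcases tendsto_atTop_or_exists_strictMono_const (fun k => (q (φ k)).2) with hb | ⟨m, ψ, hψ, hψm⟩
    · refine not_tendsto_fanProd_column hf hg n hb y ((hu.comp hφ.tendsto_atTop).congr fun k => ?_)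
      simp [← hqu, ← hφn k]
    · have hq : ∀ k, q (φ (ψ k)) = (n, m) := fun k => Prod.ext (hφn _) (hψm k)
      have hc : Tendsto (fun _ : ℕ => fanProd f g (n, m)) atTop (𝓝 y) :=
        (hu.comp (hφ.comp hψ).tendsto_atTop).congr fun k => by simp [← hqu, hq]
      exact hy (tendsto_const_nhds_iff.mp hc ▸ ⟨(n, m), hq 0 ▸ hqz _, rfl⟩)

/-- If a sequential T1 topological group contains a closed topological copy of the space `𝕃`,
then it is an α₇-space. -/
theorem alpha7_of_closed_copy_of_L (G : Type u) [Group G] [TopologicalSpace G]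
    [IsTopologicalGroup G] [T1Space G] [SequentialSpace G]
    (h : ∃ f : LSpace → G, IsClosedEmbedding f) :
    Alpha7Space G := by
  obtain ⟨f, hf⟩ := h
  intro x S hS
  choose s hsS hs using fun n => (hS n).exists_tendsto
  have hg : ∀ n, Tendsto (fun m => s n m * x⁻¹) atTop (𝓝 1) := fun n => by
    simpa using (hs n).mul_const x⁻¹
  obtain ⟨a, b, y, ha, hy⟩ := exists_tendsto_fan_of_isClosedEmbedding_LSpace hf hg
  exact exists_convSeqTo_inter_nonempty_infinite hS (u := fun k => s (a k) (b k))
    (by simpa using hy.mul_const x) ha fun k => hsS _ _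
end
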